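/- arXiv:2212.07302 — 3 statements merged into one kernel-verified Lean document; each statement's English description precedes it below -/
import Mathlib

section
/- For real numbers a, c > 0, and ℓ with 1/2 < ℓ < 1, there exists a constant C depending only on ℓ such that ∫_{|x| ≤ c} dx / ((1+|x|)^{2(1-ℓ)} √|a-x|) ≤ C (1+c)^{2(ℓ-1/2)} / (1+|a|)^{1/2}. -/
open MeasureTheory

private lemma aux_neg_rpow_half {y : ℝ} (hy : y < 0) : y ^ ((1:ℝ)/2) = 0 := by
  rw [Real.rpow_def_of_neg hy]
  have h : Real.cos ((1:ℝ)/2 * Real.pi) = 0 := by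
    rw [mul_comm, mul_one_div]; exact Real.cos_pi_div_two
  rw [h, mul_zero]

private lemma aux_neg_rpow_neg_half {y : ℝ} (hy : y < 0) : y ^ (-((1:ℝ)/2)) = 0 := by
  rw [Real.rpow_def_of_neg hy]
  have h : Real.cos (-((1:ℝ)/2) * Real.pi) = 0 := by
    rw [neg_mul, Real.cos_neg, mul_comm, mul_one_div]; exact Real.cos_pi_div_two
  rw [h, mul_zero]

private lemma abs_rpow_neg_half (a : ℝ) :
    (fun x : ℝ => |a - x| ^ (-((1:ℝ)/2))) =
      (fun x : ℝ => (a - x) ^ (-((1:ℝ)/2)) + (x - a) ^ (-((1:ℝ)/2))) := by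
  funext x
  rcases lt_trichotomy x a with h | h | h
  · rw [abs_of_pos (by linarith : (0:ℝ) < a - x),
      aux_neg_rpow_neg_half (by linarith : x - a < 0), add_zero]
  · subst h
    simp [Real.zero_rpow (by norm_num : (-((1:ℝ)/2)) ≠ 0)]
  · rw [abs_of_neg (by linarith : a - x < 0),
      aux_neg_rpow_neg_half (by linarith : a - x < 0), zero_add, neg_sub]

private lemma ii_sub (a u v : ℝ) :
    IntervalIntegrable (fun x : ℝ => (a - x) ^ (-((1:ℝ)/2))) volume u v := by
  have := (intervalIntegral.intervalIntegrable_rpow'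
    (by norm_num : (-1:ℝ) < -((1:ℝ)/2)) (a := a - u) (b := a - v)).comp_sub_left a
  simpa using this

private lemma ii_sub' (a u v : ℝ) :
    IntervalIntegrable (fun x : ℝ => (x - a) ^ (-((1:ℝ)/2))) volume u v := by
  have := (intervalIntegral.intervalIntegrable_rpow'
    (by norm_num : (-1:ℝ) < -((1:ℝ)/2)) (a := u - a) (b := v - a)).comp_sub_right a
  simpa using this

private lemma int_abs_rpow (a u v : ℝ) :
    IntegrableOn (fun x : ℝ => |a - x| ^ (-((1:ℝ)/2))) (Set.Icc u v) := by
  rcases le_or_gt u v with h | h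
  · have h₁ : IntervalIntegrable (fun x : ℝ => |a - x| ^ (-((1:ℝ)/2))) volume u v := by
      rw [abs_rpow_neg_half a]
      exact (ii_sub a u v).add (ii_sub' a u v)
    exact (intervalIntegrable_iff_integrableOn_Icc_of_le h).mp h₁
  · rw [Set.Icc_eq_empty_of_lt h]; exact integrableOn_empty

private lemma I2_val (a R : ℝ) (hR : 0 < R) :
    ∫ x in Set.Icc (a - R) (a + R), |a - x| ^ (-((1:ℝ)/2)) = 4 * R ^ ((1:ℝ)/2) := by
  have hle : a - R ≤ a + R := by linarith
  rw [integral_Icc_eq_integral_Ioc, ← intervalIntegral.integral_of_le hle,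
    abs_rpow_neg_half a]
  rw [intervalIntegral.integral_add (ii_sub a (a-R) (a+R)) (ii_sub' a (a-R) (a+R))]
  have e1 : (∫ x in (a-R)..(a+R), (a - x) ^ (-((1:ℝ)/2)))
      = ∫ x in (-R)..R, x ^ (-((1:ℝ)/2)) := by
    rw [intervalIntegral.integral_comp_sub_left (fun x => x ^ (-((1:ℝ)/2))) a]
    congr 1 <;> ring
  have e2 : (∫ x in (a-R)..(a+R), (x - a) ^ (-((1:ℝ)/2)))
      = ∫ x in (-R)..R, x ^ (-((1:ℝ)/2)) := by
    rw [intervalIntegral.integral_comp_sub_right (fun x => x ^ (-((1:ℝ)/2))) a]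
    congr 1 <;> ring
  have e3 : (∫ x in (-R)..R, x ^ (-((1:ℝ)/2))) = 2 * R ^ ((1:ℝ)/2) := by
    rw [integral_rpow (Or.inl (by norm_num : (-1:ℝ) < -((1:ℝ)/2)))]
    rw [show (-((1:ℝ)/2) + 1) = (1:ℝ)/2 by norm_num]
    rw [aux_neg_rpow_half (by linarith : (-R:ℝ) < 0)]
    ring
  rw [e1, e2, e3]; ring

private lemma I1_bound {ℓ : ℝ} (h1 : 1/2 < ℓ) (h2 : ℓ < 1) (c : ℝ) (hc : 0 < c) :
    ∫ x in Set.Icc (-c) c, (1+|x|) ^ (2*ℓ-2) ≤ 2 * (1+c) ^ (2*ℓ-1) / (2*ℓ-1) := by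
  have hL : (0:ℝ) < 2*ℓ-1 := by linarith
  have hcont : Continuous fun x : ℝ => (1+|x|) ^ (2*ℓ-2) :=
    Continuous.rpow_const (continuous_const.add continuous_abs) fun x => Or.inl (by positivity)
  have hii : ∀ u v : ℝ, IntervalIntegrable (fun x : ℝ => (1+|x|) ^ (2*ℓ-2)) volume u v :=
    fun u v => hcont.intervalIntegrable u v
  rw [integral_Icc_eq_integral_Ioc, ← intervalIntegral.integral_of_le (by linarith : -c ≤ c),
    ← intervalIntegral.integral_add_adjacent_intervals (hii (-c) 0) (hii 0 c)]
  have e1 : (∫ x in (-c:ℝ)..0, (1+|x|) ^ (2*ℓ-2)) = ∫ x in (1:ℝ)..(1+c), x ^ (2*ℓ-2) := by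
    rw [show (∫ x in (-c:ℝ)..0, (1+|x|) ^ (2*ℓ-2))
        = ∫ x in (-c:ℝ)..0, (1 - x) ^ (2*ℓ-2) from
      intervalIntegral.integral_congr (fun x hx => by
        rw [Set.uIcc_of_le (by linarith : (-c:ℝ) ≤ 0), Set.mem_Icc] at hx
        rw [abs_of_nonpos hx.2, ← sub_eq_add_neg])]
    rw [intervalIntegral.integral_comp_sub_left (fun x => x ^ (2*ℓ-2)) 1]
    congr 1 <;> ring
  have e2 : (∫ x in (0:ℝ)..c, (1+|x|) ^ (2*ℓ-2)) = ∫ x in (1:ℝ)..(1+c), x ^ (2*ℓ-2) := by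
    rw [show (∫ x in (0:ℝ)..c, (1+|x|) ^ (2*ℓ-2))
        = ∫ x in (0:ℝ)..c, (1 + x) ^ (2*ℓ-2) from
      intervalIntegral.integral_congr (fun x hx => by
        rw [Set.uIcc_of_le (by linarith : (0:ℝ) ≤ c), Set.mem_Icc] at hx
        rw [abs_of_nonneg hx.1])]
    rw [intervalIntegral.integral_comp_add_left (fun x => x ^ (2*ℓ-2)) 1]
    norm_num
  have hval : (∫ x in (1:ℝ)..(1+c), x ^ (2*ℓ-2)) ≤ (1+c) ^ (2*ℓ-1) / (2*ℓ-1) := by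
    rw [integral_rpow (Or.inl (by linarith : (-1:ℝ) < 2*ℓ-2)),
      show (2*ℓ-2+1) = 2*ℓ-1 by ring, Real.one_rpow]
    exact (div_le_div_iff_of_pos_right hL).mpr (by linarith)
  rw [e1, e2]
  rw [show (2:ℝ) * (1+c) ^ (2*ℓ-1) / (2*ℓ-1) = (1+c) ^ (2*ℓ-1)/(2*ℓ-1) + (1+c) ^ (2*ℓ-1)/(2*ℓ-1) by ring]
  exact add_le_add hval hval

theorem stmt_1 (ℓ : ℝ) (h1 : 1/2 < ℓ) (h2 : ℓ < 1) :
    ∃ C : ℝ, 0 < C ∧ ∀ a c : ℝ, 0 < a → 0 < c →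
      (∫ x in {x : ℝ | |x| ≤ c}, ((1 + |x|) ^ (2 * (1 - ℓ)) * Real.sqrt |a - x|)⁻¹)
        ≤ C * (1 + c) ^ (2 * (ℓ - 1/2)) / (1 + |a|) ^ ((1 : ℝ)/2) := by
  have hL : (0:ℝ) < 2*ℓ-1 := by linarith
  refine ⟨4/(2*ℓ-1) + 24, by positivity, ?_⟩
  intro a c ha hc
  have h1a : (0:ℝ) < 1 + a := by linarith
  have h1c : (0:ℝ) < 1 + c := by linarith
  set R : ℝ := (1+a)/2 with hRdef
  have hR0 : (0:ℝ) < R := by rw [hRdef]; linarith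
  have hdom : {x : ℝ | |x| ≤ c} = Set.Icc (-c) c := by
    ext x; simp [abs_le]
  rw [hdom]
  set t : Set ℝ := Set.Icc (a - R) (a + R) with htdef
  -- rewrite of the integrand
  have hf : ∀ x : ℝ, ((1 + |x|) ^ (2 * (1 - ℓ)) * Real.sqrt |a - x|)⁻¹
      = (1+|x|) ^ (2*ℓ-2) * |a - x| ^ (-((1:ℝ)/2)) := by
    intro x
    have h0 : (0:ℝ) < 1 + |x| := by positivity
    have e : (1+|x|) ^ (2*(1-ℓ)) = ((1+|x|) ^ (2*ℓ-2))⁻¹ := by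
      rw [show (2*(1-ℓ)) = -(2*ℓ-2) by ring, Real.rpow_neg h0.le]
    rw [mul_inv, e, inv_inv, Real.sqrt_eq_rpow, ← Real.rpow_neg (abs_nonneg _)]
  -- pointwise bound
  have hbound : ∀ x : ℝ, ((1 + |x|) ^ (2 * (1 - ℓ)) * Real.sqrt |a - x|)⁻¹
      ≤ R ^ (-((1:ℝ)/2)) * (1+|x|) ^ (2*ℓ-2)
        + R ^ (2*ℓ-2) * t.indicator (fun y => |a - y| ^ (-((1:ℝ)/2))) x := by
    intro x
    rw [hf x]
    have h0 : (0:ℝ) < 1 + |x| := by positivity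
    by_cases hx : x ∈ t
    · have hxt := hx
      rw [htdef, Set.mem_Icc] at hxt
      have hw : R ≤ 1 + |x| := by
        rcases le_or_gt a 1 with hA | hA
        · have := abs_nonneg x; rw [hRdef]; linarith
        · have h1 := le_abs_self x
          have h2 := hxt.1
          rw [hRdef] at h2 ⊢; linarith
      have hb : (1+|x|) ^ (2*ℓ-2) ≤ R ^ (2*ℓ-2) :=
        Real.rpow_le_rpow_of_nonpos hR0 hw (by linarith)
      have hle : (1+|x|) ^ (2*ℓ-2) * |a-x| ^ (-((1:ℝ)/2))
          ≤ R ^ (2*ℓ-2) * |a-x| ^ (-((1:ℝ)/2)) :=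
        mul_le_mul_of_nonneg_right hb (Real.rpow_nonneg (abs_nonneg _) _)
      rw [Set.indicator_of_mem hx]
      have ht1 : 0 ≤ R ^ (-((1:ℝ)/2)) * (1+|x|) ^ (2*ℓ-2) := by positivity
      linarith
    · have hxt := hx
      rw [htdef, Set.mem_Icc, not_and_or, not_le, not_le] at hxt
      have hRle : R ≤ |a - x| := by
        rcases hxt with h | h
        · have : R ≤ a - x := by linarith
          exact this.trans (le_abs_self _)
        · have : R ≤ -(a - x) := by linarith
          exact this.trans (neg_le_abs _)
      have hb : |a-x| ^ (-((1:ℝ)/2)) ≤ R ^ (-((1:ℝ)/2)) :=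
        Real.rpow_le_rpow_of_nonpos hR0 hRle (by norm_num)
      have hle : (1+|x|) ^ (2*ℓ-2) * |a-x| ^ (-((1:ℝ)/2))
          ≤ (1+|x|) ^ (2*ℓ-2) * R ^ (-((1:ℝ)/2)) :=
        mul_le_mul_of_nonneg_left hb (Real.rpow_nonneg h0.le _)
      rw [Set.indicator_of_notMem hx]
      rw [mul_zero, add_zero, mul_comm (R ^ (-((1:ℝ)/2)))]
      exact hle
  -- integrability of the majorant pieces
  have hcont : Continuous fun x : ℝ => (1+|x|) ^ (2*ℓ-2) :=
    Continuous.rpow_const (continuous_const.add continuous_abs) fun x => Or.inl (by positivity)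
  have hint1 : Integrable (fun x : ℝ => R ^ (-((1:ℝ)/2)) * (1+|x|) ^ (2*ℓ-2))
      (volume.restrict (Set.Icc (-c) c)) :=
    (hcont.integrableOn_Icc).const_mul _
  have hint2 : Integrable
      (fun x : ℝ => R ^ (2*ℓ-2) * t.indicator (fun y => |a - y| ^ (-((1:ℝ)/2))) x)
      (volume.restrict (Set.Icc (-c) c)) :=
    ((int_abs_rpow a (-c) c).indicator measurableSet_Icc).const_mul _
  -- step 1: compare with the majorant
  have step1 : (∫ x in Set.Icc (-c) c, ((1 + |x|) ^ (2 * (1 - ℓ)) * Real.sqrt |a - x|)⁻¹)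
      ≤ ∫ x in Set.Icc (-c) c,
          (R ^ (-((1:ℝ)/2)) * (1+|x|) ^ (2*ℓ-2)
            + R ^ (2*ℓ-2) * t.indicator (fun y => |a - y| ^ (-((1:ℝ)/2))) x) := by
    apply integral_mono_of_nonneg
    · exact Filter.Eventually.of_forall fun x =>
        inv_nonneg.mpr (mul_nonneg (Real.rpow_nonneg (by positivity) _) (Real.sqrt_nonneg _))
    · exact hint1.add hint2
    · exact Filter.Eventually.of_forall hbound
  -- step 2: compute the majorant integral
  have step2 : (∫ x in Set.Icc (-c) c,
        (R ^ (-((1:ℝ)/2)) * (1+|x|) ^ (2*ℓ-2)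
          + R ^ (2*ℓ-2) * t.indicator (fun y => |a - y| ^ (-((1:ℝ)/2))) x))
      = R ^ (-((1:ℝ)/2)) * (∫ x in Set.Icc (-c) c, (1+|x|) ^ (2*ℓ-2))
        + R ^ (2*ℓ-2) * (∫ x in Set.Icc (-c) c ∩ t, |a - x| ^ (-((1:ℝ)/2))) := by
    rw [integral_add hint1 hint2, integral_const_mul, integral_const_mul,
      setIntegral_indicator measurableSet_Icc]
  -- bounds on pieces
  have hI1 := I1_bound h1 h2 c hc
  have hI1nn : (0:ℝ) ≤ ∫ x in Set.Icc (-c) c, (1+|x|) ^ (2*ℓ-2) :=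
    integral_nonneg fun x => Real.rpow_nonneg (by positivity) _
  have h2half : (2:ℝ) ^ ((1:ℝ)/2) ≤ 2 := by
    calc (2:ℝ) ^ ((1:ℝ)/2) ≤ (2:ℝ) ^ (1:ℝ) :=
          Real.rpow_le_rpow_of_exponent_le one_le_two (by norm_num)
      _ = 2 := Real.rpow_one 2
  have hRhalf : R ^ (-((1:ℝ)/2)) ≤ 2 * (1+a) ^ (-((1:ℝ)/2)) := by
    have e : R ^ (-((1:ℝ)/2)) = (1+a) ^ (-((1:ℝ)/2)) * (2:ℝ) ^ ((1:ℝ)/2) := by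
      rw [hRdef, Real.div_rpow h1a.le (by norm_num : (0:ℝ) ≤ 2),
        Real.rpow_neg (by norm_num : (0:ℝ) ≤ 2), div_inv_eq_mul]
    rw [e]
    have := mul_le_mul_of_nonneg_left h2half (Real.rpow_nonneg h1a.le (-((1:ℝ)/2)))
    linarith
  have hYnn : (0:ℝ) ≤ (1+a) ^ (-((1:ℝ)/2)) := Real.rpow_nonneg h1a.le _
  have hXnn : (0:ℝ) ≤ (1+c) ^ (2*ℓ-1) := Real.rpow_nonneg h1c.le _
  have piece1 : R ^ (-((1:ℝ)/2)) * (∫ x in Set.Icc (-c) c, (1+|x|) ^ (2*ℓ-2))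
      ≤ (2 * (1+a) ^ (-((1:ℝ)/2))) * (2 * (1+c) ^ (2*ℓ-1) / (2*ℓ-1)) :=
    mul_le_mul hRhalf hI1 hI1nn (by positivity)
  have hI2nn : (0:ℝ) ≤ ∫ x in Set.Icc (-c) c ∩ t, |a - x| ^ (-((1:ℝ)/2)) :=
    integral_nonneg fun x => Real.rpow_nonneg (abs_nonneg _) _
  have piece2 : R ^ (2*ℓ-2) * (∫ x in Set.Icc (-c) c ∩ t, |a - x| ^ (-((1:ℝ)/2)))
      ≤ 24 * ((1+c) ^ (2*ℓ-1) * (1+a) ^ (-((1:ℝ)/2))) := by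
    by_cases hac : 1 + a ≤ 3 * (1 + c)
    · have hI2 : (∫ x in Set.Icc (-c) c ∩ t, |a - x| ^ (-((1:ℝ)/2)))
          ≤ 4 * R ^ ((1:ℝ)/2) := by
        rw [← I2_val a R hR0]
        refine setIntegral_mono_set (int_abs_rpow a (a-R) (a+R))
          (Filter.Eventually.of_forall fun y => Real.rpow_nonneg (abs_nonneg _) _)
          (HasSubset.Subset.eventuallyLE ?_)
        rw [htdef]
        exact Set.inter_subset_right
      have hm : R ^ (2*ℓ-2) * (∫ x in Set.Icc (-c) c ∩ t, |a - x| ^ (-((1:ℝ)/2)))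
          ≤ R ^ (2*ℓ-2) * (4 * R ^ ((1:ℝ)/2)) :=
        mul_le_mul_of_nonneg_left hI2 (Real.rpow_nonneg hR0.le _)
      have e : R ^ (2*ℓ-2) * (4 * R ^ ((1:ℝ)/2))
          = 4 * (R ^ (2*ℓ-1) * R ^ (-((1:ℝ)/2))) := by
        rw [show R ^ (2*ℓ-2) * (4 * R ^ ((1:ℝ)/2)) = 4 * (R ^ (2*ℓ-2) * R ^ ((1:ℝ)/2)) by ring,
          ← Real.rpow_add hR0, ← Real.rpow_add hR0,
          show (2*ℓ-2 + (1:ℝ)/2) = 2*ℓ-1 + -((1:ℝ)/2) by ring]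
      have hRX : R ^ (2*ℓ-1) ≤ 3 * (1+c) ^ (2*ℓ-1) := by
        have hRle : R ≤ 3 * (1+c) := by rw [hRdef]; linarith
        calc R ^ (2*ℓ-1) ≤ (3 * (1+c)) ^ (2*ℓ-1) :=
              Real.rpow_le_rpow hR0.le hRle (by linarith)
          _ = (3:ℝ) ^ (2*ℓ-1) * (1+c) ^ (2*ℓ-1) :=
              Real.mul_rpow (by norm_num) h1c.le
          _ ≤ 3 * (1+c) ^ (2*ℓ-1) := by
              have h3 : (3:ℝ) ^ (2*ℓ-1) ≤ 3 := by
                calc (3:ℝ) ^ (2*ℓ-1) ≤ (3:ℝ) ^ (1:ℝ) :=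
                      Real.rpow_le_rpow_of_exponent_le (by norm_num) (by linarith)
                  _ = 3 := Real.rpow_one 3
              exact mul_le_mul_of_nonneg_right h3 hXnn
      have hprod : R ^ (2*ℓ-1) * R ^ (-((1:ℝ)/2))
          ≤ (3 * (1+c) ^ (2*ℓ-1)) * (2 * (1+a) ^ (-((1:ℝ)/2))) :=
        mul_le_mul hRX hRhalf (Real.rpow_nonneg hR0.le _) (by positivity)
      calc R ^ (2*ℓ-2) * (∫ x in Set.Icc (-c) c ∩ t, |a - x| ^ (-((1:ℝ)/2)))
          ≤ R ^ (2*ℓ-2) * (4 * R ^ ((1:ℝ)/2)) := hm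
        _ = 4 * (R ^ (2*ℓ-1) * R ^ (-((1:ℝ)/2))) := e
        _ ≤ 4 * ((3 * (1+c) ^ (2*ℓ-1)) * (2 * (1+a) ^ (-((1:ℝ)/2)))) := by linarith
        _ = 24 * ((1+c) ^ (2*ℓ-1) * (1+a) ^ (-((1:ℝ)/2))) := by ring
    · have hempty : Set.Icc (-c) c ∩ t = ∅ := by
        rw [Set.eq_empty_iff_forall_notMem]
        rintro x ⟨hx1, hx2⟩
        rw [Set.mem_Icc] at hx1
        rw [htdef, Set.mem_Icc, hRdef] at hx2
        push_neg at hac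
        have := hx1.2
        have := hx2.1
        linarith
      rw [hempty, setIntegral_empty]
      rw [mul_zero]
      positivity
  -- final arithmetic
  have hrhs : (4/(2*ℓ-1) + 24) * (1 + c) ^ (2 * (ℓ - 1/2)) / (1 + |a|) ^ ((1:ℝ)/2)
      = (4/(2*ℓ-1) + 24) * ((1+c) ^ (2*ℓ-1) * (1+a) ^ (-((1:ℝ)/2))) := by
    rw [abs_of_pos ha, show (2 * (ℓ - 1/2)) = 2*ℓ-1 by ring,
      Real.rpow_neg h1a.le, div_eq_mul_inv, mul_assoc]
  rw [hrhs]
  calc (∫ x in Set.Icc (-c) c, ((1 + |x|) ^ (2 * (1 - ℓ)) * Real.sqrt |a - x|)⁻¹)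
      ≤ _ := step1
    _ = _ := step2
    _ ≤ (4/(2*ℓ-1) + 24) * ((1+c) ^ (2*ℓ-1) * (1+a) ^ (-((1:ℝ)/2))) := by
        have e : (2 * (1+a) ^ (-((1:ℝ)/2))) * (2 * (1+c) ^ (2*ℓ-1) / (2*ℓ-1))
            + 24 * ((1+c) ^ (2*ℓ-1) * (1+a) ^ (-((1:ℝ)/2)))
            = (4/(2*ℓ-1) + 24) * ((1+c) ^ (2*ℓ-1) * (1+a) ^ (-((1:ℝ)/2))) := by
          field_simp
          ring
        linarith
end

section
/- For real numbers a, c and exponents ℓ, ℓ' with 1/4 < ℓ' ≤ ℓ < 1/2, there exists a constant C (depending only on ℓ, ℓ') such that ∫_ℝ dx / ((1+|x-a|)^{2ℓ} (1+|x-c|)^{2ℓ'}) ≤ C / (1+|a-c|)^{2ℓ+2ℓ'-1}. -/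
/-!
With `u = 1 + |x - a|`, `v = 1 + |x - c|` and `S = (1 + |a - c|) / 2` we have `S ≤ max u v`,
so the integrand `u⁻ᵖ v⁻ᵠ` is at most `u⁻ᵖ (max u S)⁻ᵠ + v⁻ᵠ (max v S)⁻ᵖ`. Each summand is a
one-centre weight; it is even and decreasing in `|y|`, so its integral is at most twice that of
`z⁻ᵖ (max z S)⁻ᵠ` over `(0, ∞)`, which is computed by splitting at `S`: the part below `S`
is `S⁻ᵠ ∫₀ˢ z⁻ᵖ` (finite as `p < 1`), the part above is `∫ₛ^∞ z^(-p-q)` (finite as `p + q > 1`),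
and both are multiples of `S^(1-p-q)`.
-/

open MeasureTheory Set

section TruncatedPower

variable {p q S : ℝ}

lemma inv_rpow_mul_max_rpow_of_le {z : ℝ} (hz : 0 < z) (hzS : z ≤ S) :
    (z ^ p * max z S ^ q)⁻¹ = S ^ (-q) * z ^ (-p) := by
  rw [max_eq_right hzS, Real.rpow_neg hz.le, Real.rpow_neg (hz.le.trans hzS), mul_inv,
    mul_comm]

lemma inv_rpow_mul_max_rpow_of_ge {z : ℝ} (hz : 0 < z) (hSz : S ≤ z) :
    (z ^ p * max z S ^ q)⁻¹ = z ^ (-(p + q)) := by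
  rw [max_eq_left hSz, ← Real.rpow_add hz, Real.rpow_neg hz.le]

lemma inv_rpow_mul_max_rpow_anti (hp : 0 ≤ p) (hq : 0 ≤ q) {z w : ℝ} (hz : 0 < z) (hzw : z ≤ w) :
    (w ^ p * max w S ^ q)⁻¹ ≤ (z ^ p * max z S ^ q)⁻¹ := by
  have hw : 0 < w := hz.trans_le hzw
  gcongr

lemma integrableOn_Ioi_inv_rpow_mul_max_rpow (hp : p < 1) (hpq : 1 < p + q) (hS : 0 < S) :
    IntegrableOn (fun z : ℝ => (z ^ p * max z S ^ q)⁻¹) (Ioi 0) := by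
  rw [← Ioc_union_Ioi_eq_Ioi hS.le]
  refine IntegrableOn.union ?_ ?_
  · have h : IntegrableOn (fun z : ℝ => S ^ (-q) * z ^ (-p)) (Ioc 0 S) :=
      ((intervalIntegrable_iff_integrableOn_Ioc_of_le hS.le).1
        (intervalIntegral.intervalIntegrable_rpow' (by linarith))).const_mul _
    exact h.congr_fun (fun z hz => (inv_rpow_mul_max_rpow_of_le hz.1 hz.2).symm)
      measurableSet_Ioc
  · exact (integrableOn_Ioi_rpow_of_lt (by linarith) hS).congr_fun
      (fun z hz => (inv_rpow_mul_max_rpow_of_ge (hS.trans hz) hz.le).symm) measurableSet_Ioi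

lemma integral_Ioi_inv_rpow_mul_max_rpow (hp : p < 1) (hpq : 1 < p + q) (hS : 0 < S) :
    ∫ z in Ioi 0, (z ^ p * max z S ^ q)⁻¹ = S ^ (1 - p - q) * (1 / (1 - p) + 1 / (p + q - 1)) := by
  have hint := integrableOn_Ioi_inv_rpow_mul_max_rpow hp hpq hS
  have hIoc : ∫ z in Ioc 0 S, (z ^ p * max z S ^ q)⁻¹ = S ^ (1 - p - q) / (1 - p) := by
    rw [setIntegral_congr_fun measurableSet_Ioc
        (fun z hz => inv_rpow_mul_max_rpow_of_le hz.1 hz.2), integral_const_mul,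
      ← intervalIntegral.integral_of_le hS.le, integral_rpow (Or.inl (by linarith)),
      Real.zero_rpow (by linarith), show -p + 1 = 1 - p by ring,
      show 1 - p - q = -q + (1 - p) by ring, Real.rpow_add hS]
    ring
  have hIoi : ∫ z in Ioi S, (z ^ p * max z S ^ q)⁻¹ = S ^ (1 - p - q) / (p + q - 1) := by
    rw [setIntegral_congr_fun measurableSet_Ioi
        (fun z hz => inv_rpow_mul_max_rpow_of_ge (hS.trans hz) hz.le),
      integral_Ioi_rpow_of_lt (by linarith) hS, show -(p + q) + 1 = 1 - p - q by ring, neg_div,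
      ← div_neg]
    congr 1
    ring
  rw [← Ioc_union_Ioi_eq_Ioi hS.le, setIntegral_union (Ioc_disjoint_Ioi le_rfl) measurableSet_Ioi
    (hint.mono_set Ioc_subset_Ioi_self) (hint.mono_set (Ioi_subset_Ioi hS.le)), hIoc, hIoi]
  ring

lemma integrable_inv_one_add_abs_rpow_mul_max_rpow (hq : 0 ≤ q) (hpq : 1 < p + q) :
    Integrable fun y : ℝ => ((1 + |y|) ^ p * max (1 + |y|) S ^ q)⁻¹ := by
  refine (integrable_one_add_norm (E := ℝ) (r := p + q) (by simpa using hpq)).mono'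
    (by fun_prop) (ae_of_all _ fun y => ?_)
  have h : 0 < 1 + |y| := by positivity
  rw [Real.norm_eq_abs, abs_of_pos (by positivity), Real.norm_eq_abs, Real.rpow_neg h.le,
    Real.rpow_add h]
  gcongr
  exact le_max_left _ _

lemma integral_inv_one_add_abs_rpow_mul_max_rpow_le (hp₀ : 0 ≤ p) (hp : p < 1) (hpq : 1 < p + q)
    (hS : 0 < S) :
    ∫ y, ((1 + |y|) ^ p * max (1 + |y|) S ^ q)⁻¹
      ≤ 2 * (S ^ (1 - p - q) * (1 / (1 - p) + 1 / (p + q - 1))) := by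
  rw [integral_comp_abs (f := fun z => ((1 + z) ^ p * max (1 + z) S ^ q)⁻¹),
    ← integral_Ioi_inv_rpow_mul_max_rpow hp hpq hS]
  gcongr 2 * ?_
  refine integral_mono_of_nonneg (ae_restrict_of_forall_mem measurableSet_Ioi fun z hz => ?_)
    (integrableOn_Ioi_inv_rpow_mul_max_rpow hp hpq hS)
    (ae_restrict_of_forall_mem measurableSet_Ioi fun z hz => ?_)
  · have : 0 < 1 + z := by linarith [mem_Ioi.1 hz]
    positivity
  · exact inv_rpow_mul_max_rpow_anti hp₀ (by linarith) hz (by linarith)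

end TruncatedPower

lemma inv_rpow_mul_rpow_le_add {p q S u v : ℝ} (hp : 0 ≤ p) (hq : 0 ≤ q) (hu : 0 < u)
    (hv : 0 < v) (hS : S ≤ max u v) :
    (u ^ p * v ^ q)⁻¹ ≤ (u ^ p * max u S ^ q)⁻¹ + (v ^ q * max v S ^ p)⁻¹ := by
  rcases le_total u v with huv | hvu
  · have hmax : max u S ≤ v := max_le huv (hS.trans (max_eq_right huv).le)
    have h : (u ^ p * v ^ q)⁻¹ ≤ (u ^ p * max u S ^ q)⁻¹ := by gcongr
    have h' : 0 ≤ (v ^ q * max v S ^ p)⁻¹ := by positivity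
    linarith
  · have hmax : max v S ≤ u := max_le hvu (hS.trans (max_eq_left hvu).le)
    have h : (u ^ p * v ^ q)⁻¹ ≤ (v ^ q * max v S ^ p)⁻¹ := by rw [mul_comm]; gcongr
    have h' : 0 ≤ (u ^ p * max u S ^ q)⁻¹ := by positivity
    linarith

theorem integral_inv_one_add_abs_sub_rpow_mul_le {p q : ℝ} (hp : p < 1) (hq : q < 1)
    (hpq : 1 < p + q) (a c : ℝ) :
    ∫ x, ((1 + |x - a|) ^ p * (1 + |x - c|) ^ q)⁻¹
      ≤ 2 ^ (p + q) * (1 / (1 - p) + 1 / (1 - q) + 2 / (p + q - 1))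
          / (1 + |a - c|) ^ (p + q - 1) := by
  set S := (1 + |a - c|) / 2 with hS_def
  have hS : 0 < S := by positivity
  have hp₀ : 0 ≤ p := by linarith
  have hq₀ : 0 ≤ q := by linarith
  have hqp : 1 < q + p := by linarith
  have hpt : ∀ x, ((1 + |x - a|) ^ p * (1 + |x - c|) ^ q)⁻¹
      ≤ ((1 + |x - a|) ^ p * max (1 + |x - a|) S ^ q)⁻¹
        + ((1 + |x - c|) ^ q * max (1 + |x - c|) S ^ p)⁻¹ := fun x => by
    refine inv_rpow_mul_rpow_le_add hp₀ hq₀ (by positivity) (by positivity) ?_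
    have htri := abs_sub_le a x c
    rw [abs_sub_comm a x] at htri
    linarith [le_max_left (1 + |x - a|) (1 + |x - c|), le_max_right (1 + |x - a|) (1 + |x - c|)]
  have hga := Integrable.comp_sub_right
    (integrable_inv_one_add_abs_rpow_mul_max_rpow (p := p) (S := S) hq₀ hpq) a
  have hgc := Integrable.comp_sub_right
    (integrable_inv_one_add_abs_rpow_mul_max_rpow (p := q) (S := S) hp₀ hqp) c
  have hS_pow : S ^ (1 - p - q) = 2 ^ (p + q - 1) / (1 + |a - c|) ^ (p + q - 1) := by
    rw [show 1 - p - q = -(p + q - 1) by ring, Real.rpow_neg hS.le, hS_def,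
      Real.div_rpow (by positivity) zero_le_two, inv_div]
  calc ∫ x, ((1 + |x - a|) ^ p * (1 + |x - c|) ^ q)⁻¹
      ≤ ∫ x, (((1 + |x - a|) ^ p * max (1 + |x - a|) S ^ q)⁻¹
        + ((1 + |x - c|) ^ q * max (1 + |x - c|) S ^ p)⁻¹) :=
        integral_mono_of_nonneg (ae_of_all _ fun x => by positivity) (hga.add hgc)
          (ae_of_all _ hpt)
    _ = (∫ y, ((1 + |y|) ^ p * max (1 + |y|) S ^ q)⁻¹)
          + ∫ y, ((1 + |y|) ^ q * max (1 + |y|) S ^ p)⁻¹ := by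
        rw [integral_add hga hgc,
          integral_sub_right_eq_self (fun y => ((1 + |y|) ^ p * max (1 + |y|) S ^ q)⁻¹),
          integral_sub_right_eq_self (fun y => ((1 + |y|) ^ q * max (1 + |y|) S ^ p)⁻¹)]
    _ ≤ 2 * (S ^ (1 - p - q) * (1 / (1 - p) + 1 / (p + q - 1)))
          + 2 * (S ^ (1 - q - p) * (1 / (1 - q) + 1 / (q + p - 1))) :=
        add_le_add (integral_inv_one_add_abs_rpow_mul_max_rpow_le hp₀ hp hpq hS)
          (integral_inv_one_add_abs_rpow_mul_max_rpow_le hq₀ hq hqp hS)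
    _ = _ := by
        have h_two : (2 : ℝ) ^ (p + q) = 2 ^ (p + q - 1) * 2 := by
          rw [← Real.rpow_add_one two_ne_zero, sub_add_cancel]
        rw [show 1 - q - p = 1 - p - q by ring, show q + p - 1 = p + q - 1 by ring, hS_pow, h_two]
        ring

theorem stmt_2 (ℓ ℓ' : ℝ) (h1 : 1/4 < ℓ') (h2 : ℓ' ≤ ℓ) (h3 : ℓ < 1/2) :
    ∃ C : ℝ, 0 < C ∧ ∀ a c : ℝ,
      (∫ x : ℝ, ((1 + |x - a|) ^ (2 * ℓ) * (1 + |x - c|) ^ (2 * ℓ'))⁻¹)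
        ≤ C / (1 + |a - c|) ^ (2 * ℓ + 2 * ℓ' - 1) := by
  have hp : 0 < 1 - 2 * ℓ := by linarith
  have hq : 0 < 1 - 2 * ℓ' := by linarith
  have hpq : 0 < 2 * ℓ + 2 * ℓ' - 1 := by linarith
  exact ⟨_, by positivity,
    integral_inv_one_add_abs_sub_rpow_mul_le (by linarith) (by linarith) (by linarith)⟩
end

section
/- Let N ≥ 1 be a real number and let δ = 10⁻³. Suppose 2N ≤ ξ ≤ 2N + δ(2N)^{-1/2}, N ≤ ξ₁ ≤ N + δN^{-1/2}, |τ - ξ³| ≤ 1, and |τ₁ - 4ξ₁³| ≤ 1. Then N - δN^{-1/2} ≤ ξ - ξ₁ ≤ N + δ(2N)^{-1/2}, and |τ - τ₁ - 4(ξ-ξ₁)³| ≤ |τ-ξ³| + |τ₁-4ξ₁³| + 12ξ(ξ₁ - ξ/2)² ≤ 3. -/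
theorem stmt_19 (N ξ ξ₁ τ τ₁ : ℝ) (hN : 1 ≤ N)
    (hξ₁ : 2 * N ≤ ξ) (hξ₂ : ξ ≤ 2 * N + (1/1000) * (2 * N) ^ (-(1:ℝ)/2))
    (hξ₁₁ : N ≤ ξ₁) (hξ₁₂ : ξ₁ ≤ N + (1/1000) * N ^ (-(1:ℝ)/2))
    (hτ : |τ - ξ^3| ≤ 1) (hτ₁ : |τ₁ - 4 * ξ₁^3| ≤ 1) :
    (N - (1/1000) * N ^ (-(1:ℝ)/2) ≤ ξ - ξ₁) ∧
    (ξ - ξ₁ ≤ N + (1/1000) * (2 * N) ^ (-(1:ℝ)/2)) ∧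
    (|τ - τ₁ - 4 * (ξ - ξ₁)^3|
        ≤ |τ - ξ^3| + |τ₁ - 4 * ξ₁^3| + 12 * ξ * (ξ₁ - ξ/2)^2) ∧
    (|τ - ξ^3| + |τ₁ - 4 * ξ₁^3| + 12 * ξ * (ξ₁ - ξ/2)^2 ≤ 3) := by
  have hN0 : (0:ℝ) < N := lt_of_lt_of_le one_pos hN
  set a : ℝ := N ^ (-(1:ℝ)/2) with ha_def
  set b : ℝ := (2*N) ^ (-(1:ℝ)/2) with hb_def
  have ha0 : 0 < a := Real.rpow_pos_of_pos hN0 _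
  have hb0 : 0 < b := Real.rpow_pos_of_pos (by linarith) _
  have ha1 : a ≤ 1 := Real.rpow_le_one_of_one_le_of_nonpos hN (by norm_num)
  have hba : b ≤ a := by
    apply Real.rpow_le_rpow_of_nonpos hN0 (by linarith) (by norm_num)
  have haa : a * a = 1 / N := by
    rw [ha_def, ← Real.rpow_add hN0]
    norm_num [Real.rpow_neg_one]
  have hD0 : 0 ≤ 12 * ξ * (ξ₁ - ξ/2)^2 := by nlinarith [sq_nonneg (ξ₁ - ξ/2)]
  refine ⟨by linarith, by linarith, ?_, ?_⟩
  · have heq : τ - τ₁ - 4 * (ξ - ξ₁)^3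
        = (τ - ξ^3) - (τ₁ - 4 * ξ₁^3) - 12 * ξ * (ξ₁ - ξ/2)^2 := by ring
    rw [heq]
    calc |(τ - ξ^3) - (τ₁ - 4 * ξ₁^3) - 12 * ξ * (ξ₁ - ξ/2)^2|
        ≤ |(τ - ξ^3) - (τ₁ - 4 * ξ₁^3)| + |12 * ξ * (ξ₁ - ξ/2)^2| := abs_sub _ _
      _ ≤ |τ - ξ^3| + |τ₁ - 4 * ξ₁^3| + 12 * ξ * (ξ₁ - ξ/2)^2 := by
          have := abs_sub (τ - ξ^3) (τ₁ - 4 * ξ₁^3)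
          rw [abs_of_nonneg hD0]; linarith
  · have hsq : (ξ₁ - ξ/2)^2 ≤ ((1/1000) * a)^2 := by
      apply sq_le_sq'
      · nlinarith
      · nlinarith
    have hξ3 : ξ ≤ 3 * N := by nlinarith
    have hNaa : N * (a * a) = 1 := by rw [haa]; field_simp
    have hp : ξ * (ξ₁ - ξ/2)^2 ≤ (3*N) * ((1/1000) * a)^2 :=
      mul_le_mul hξ3 hsq (sq_nonneg _) (by linarith)
    have hD1 : 12 * ξ * (ξ₁ - ξ/2)^2 ≤ 1 := by nlinarith [hp, hNaa]
    linarith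
end
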